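/- arXiv:2102.05103 — 2 statements merged into one kernel-verified Lean document; each statement's English description precedes it below -/
import Mathlib

section
/- Fix a factor index k and symmetric matrices D₁,…,D_r at which V := I_n + ∑_{k=1}^r ∑_{j=1}^{l_k} Z_{(k,j)}·D_k·Z_{(k,j)}ᵀ is positive definite. Consider the function g : ℝ^{q_k(q_k+1)/2} → ℝ obtained by evaluating the log-likelihood l with D_k replaced by the unique symmetric matrix whose half-vectorization is the argument v, all other quantities held fixed. Then g is differentiable at v = vech(D_k), and its gradient there (a column vector of length q_k(q_k+1)/2) equals (1/2)·𝒟_{q_k}ᵀ·vec( ∑_{j=1}^{l_k} Z_{(k,j)}ᵀ·V⁻¹·(σ⁻²·e·eᵀ − V)·V⁻¹·Z_{(k,j)} ). -/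
open Matrix MeasureTheory ProbabilityTheory

/-- Column-major vectorization of a matrix: the entry of `vec A` at index `(j, i)`
(column `j`, row `i`) is `A i j`. -/
def vec {α β R : Type*} (A : Matrix α β R) : β × α → R := fun p => A p.2 p.1

/-- Index type for the half-vectorization of a `q × q` matrix: pairs `(j, i)`
(column `j`, row `i`) lying on or below the diagonal, i.e. with `j ≤ i`. -/
abbrev VechIdx (q : ℕ) := { p : Fin q × Fin q // p.1 ≤ p.2 }

/-- Half-vectorization: stacks the entries of `A` on and below the diagonal column by column. -/
def vech {R : Type*} {q : ℕ} (A : Matrix (Fin q) (Fin q) R) : VechIdx q → R :=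
  fun p => A p.1.2 p.1.1

/-- The duplication matrix `𝒟_q`: the unique `q² × (q(q+1)/2)` matrix with
`𝒟_q · vech A = vec A` for every symmetric `q × q` matrix `A`. -/
def dup (q : ℕ) : Matrix (Fin q × Fin q) (VechIdx q) ℝ := fun v w =>
  if (v.1 = w.1.1 ∧ v.2 = w.1.2) ∨ (v.1 = w.1.2 ∧ v.2 = w.1.1) then 1 else 0

/-- The commutation matrix `K_{q,q}`: the unique `q² × q²` matrix with
`K_{q,q} · vec A = vec Aᵀ` for every `q × q` matrix `A`. -/
def commMat (q : ℕ) : Matrix (Fin q × Fin q) (Fin q × Fin q) ℝ := fun a b =>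
  if a.1 = b.2 ∧ a.2 = b.1 then 1 else 0

/-- The symmetrization matrix `N_q = (1/2)(I_{q²} + K_{q,q})`. -/
noncomputable def Nmat (q : ℕ) : Matrix (Fin q × Fin q) (Fin q × Fin q) ℝ :=
  (1 / 2 : ℝ) • (1 + commMat q)

/-- The unique symmetric matrix whose half-vectorization is `v`. -/
def unvech {q : ℕ} (v : VechIdx q → ℝ) : Matrix (Fin q) (Fin q) ℝ := fun i j =>
  if h : j ≤ i then v ⟨(j, i), h⟩ else v ⟨(i, j), le_of_not_ge h⟩

/-!
Along the line `vech D_k + t u` the covariance matrix is `V + t H` with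
`H = ∑ⱼ Z_{(k,j)} U Z_{(k,j)}ᵀ`, `U = unvech u`. Jacobi's formula
`d log det V = tr (V⁻¹ dV)` and `d (V⁻¹) = -V⁻¹ dV V⁻¹` give the directional derivative
`½ tr (V⁻¹ (σ⁻² e eᵀ - V) V⁻¹ H)`, which cyclicity of the trace turns into `½ tr (S U)` with
`S = ∑ⱼ Z_{(k,j)}ᵀ V⁻¹ (σ⁻² e eᵀ - V) V⁻¹ Z_{(k,j)}`; for `u = e_w` this is the `w`-th entry
of `½ 𝒟ᵀ vec S`. Differentiability holds because `det` is a polynomial in the entries and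
inversion is differentiable at the invertible `V`.
-/

theorem Fintype.sum_apply_update {ι M : Type*} {β : ι → Type*} [Fintype ι] [DecidableEq ι]
    [AddCommGroup M] (f : ∀ i, β i → M) (D : ∀ i, β i) (k : ι) (x : β k) :
    ∑ i, f i (Function.update D k x i) = ∑ i, f i (D i) + (f k x - f k (D k)) := by
  simp_rw [Function.apply_update f, Finset.sum_update_of_mem (Finset.mem_univ k),
    Finset.sdiff_singleton_eq_erase, ← Finset.add_sum_erase _ _ (Finset.mem_univ k)]
  abel

theorem Matrix.dotProduct_mulVec_eq_trace_mul_vecMulVec {m R : Type*} [Fintype m]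
    [CommSemiring R] (e : m → R) (A : Matrix m m R) :
    e ⬝ᵥ (A *ᵥ e) = (A * vecMulVec e e).trace := by
  simp only [dotProduct, mulVec, trace, diag, mul_apply, vecMulVec_apply, Finset.mul_sum]
  exact Finset.sum_congr rfl fun i _ => Finset.sum_congr rfl fun j _ => by ring

-- Any norm gives the same derivatives; an operator norm makes `Matrix m m ℝ` a normed algebra,
-- which the derivative of `Ring.inverse` requires.
attribute [local instance] Matrix.linftyOpNormedRing Matrix.linftyOpNormedAlgebra

section MatrixCalculus

variable {m : Type*} [Fintype m] [DecidableEq m]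

theorem Matrix.trace_inv_mul_sub_mul_inv_mul {R : Type*} [CommRing R] {A : Matrix m m R}
    (hA : IsUnit A.det) (c : R) (E H : Matrix m m R) :
    (A⁻¹ * (c • E - A) * A⁻¹ * H).trace = c * (A⁻¹ * H * A⁻¹ * E).trace - (A⁻¹ * H).trace := by
  rw [Matrix.mul_sub, Matrix.sub_mul, Matrix.sub_mul, trace_sub,
    mul_nonsing_inv_cancel_right _ _ hA, Matrix.mul_smul, Matrix.smul_mul, Matrix.smul_mul,
    trace_smul, smul_eq_mul, Matrix.mul_assoc, trace_mul_comm]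
  simp only [Matrix.mul_assoc]

theorem Matrix.differentiable_det : Differentiable ℝ (fun A : Matrix m m ℝ => A.det) := by
  have hentry (i j : m) : Differentiable ℝ (fun A : Matrix m m ℝ => A i j) :=
    (LinearMap.toContinuousLinearMap (entryLinearMap ℝ ℝ i j)).differentiable
  simp only [det_apply']
  fun_prop

theorem Matrix.hasDerivAt_det_one_add_smul (M : Matrix m m ℝ) :
    HasDerivAt (fun t : ℝ => (1 + t • M).det) M.trace 0 := by
  have := (((hasDerivAt_id (0 : ℝ)).const_mul M.trace).const_add 1).add
    ((Polynomial.hasDerivAt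
      (det (1 + (Polynomial.X : Polynomial ℝ) • M.map Polynomial.C)).divX.divX 0).mul
      (hasDerivAt_pow 2 (0 : ℝ)))
  exact (this.congr_of_eventuallyEq (.of_forall fun t => det_one_add_smul t M)).congr_deriv
    (by norm_num)

theorem Matrix.hasDerivAt_det_add_smul {A : Matrix m m ℝ} (hA : IsUnit A.det)
    (H : Matrix m m ℝ) :
    HasDerivAt (fun t : ℝ => (A + t • H).det) (A.det * (A⁻¹ * H).trace) 0 := by
  have hfac (t : ℝ) : A + t • H = A * (1 + t • (A⁻¹ * H)) := by
    rw [Matrix.mul_add, Matrix.mul_one, Matrix.mul_smul, mul_nonsing_inv_cancel_left _ _ hA]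
  simp_rw [hfac, det_mul]
  exact (hasDerivAt_det_one_add_smul _).const_mul _

theorem Matrix.hasDerivAt_log_det_add_smul {A : Matrix m m ℝ} (hA : IsUnit A.det)
    (H : Matrix m m ℝ) :
    HasDerivAt (fun t : ℝ => Real.log (A + t • H).det) (A⁻¹ * H).trace 0 := by
  have := (hasDerivAt_det_add_smul hA H).log (by simpa using hA.ne_zero)
  simpa [hA.ne_zero] using this

theorem Matrix.hasDerivAt_inv_add_smul {A : Matrix m m ℝ} (hA : IsUnit A.det)
    (H : Matrix m m ℝ) :
    HasDerivAt (fun t : ℝ => (A + t • H)⁻¹) (-(A⁻¹ * H * A⁻¹)) 0 := by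
  obtain ⟨u, hu⟩ := (isUnit_iff_isUnit_det A).mpr hA
  have hline : HasDerivAt (fun t : ℝ => A + t • H) H 0 := by
    have := ((hasDerivAt_id' (0 : ℝ)).smul_const H).const_add A
    rw [one_smul] at this
    exact this
  have := (hasFDerivAt_ringInverse (𝕜 := ℝ) u).comp_hasDerivAt_of_eq 0 hline (by simp [hu])
  simp only [coe_units_inv, hu] at this
  exact this.congr_of_eventuallyEq (.of_forall fun t => nonsing_inv_eq_ringInverse _)

theorem Matrix.hasDerivAt_trace_inv_add_smul_mul {A : Matrix m m ℝ} (hA : IsUnit A.det)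
    (H E : Matrix m m ℝ) :
    HasDerivAt (fun t : ℝ => ((A + t • H)⁻¹ * E).trace) (-(A⁻¹ * H * A⁻¹) * E).trace 0 :=
  (traceLinearMap m ℝ ℝ).toContinuousLinearMap.hasFDerivAt.comp_hasDerivAt 0
    ((hasDerivAt_inv_add_smul hA H).mul_const E)

end MatrixCalculus

noncomputable def logLik {m : Type*} [Fintype m] [DecidableEq m] (σ : ℝ) (e : m → ℝ)
    (V : Matrix m m ℝ) : ℝ :=
  -(1 / 2 : ℝ) * ((Fintype.card m : ℝ) * Real.log (σ ^ 2) + (σ ^ 2)⁻¹ * (e ⬝ᵥ (V⁻¹ *ᵥ e))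
    + Real.log V.det)

section LogLik

variable {m : Type*} [Fintype m] [DecidableEq m] (σ : ℝ) (e : m → ℝ) {V : Matrix m m ℝ}

theorem differentiableAt_logLik (hV : IsUnit V.det) : DifferentiableAt ℝ (logLik σ e) V := by
  have hquad :
      DifferentiableAt ℝ (fun A : Matrix m m ℝ => (Ring.inverse A * vecMulVec e e).trace) V :=
    (traceLinearMap m ℝ ℝ).toContinuousLinearMap.differentiableAt.comp V
      ((differentiableAt_inverse ((isUnit_iff_isUnit_det V).mpr hV)).mul_const _)
  have hlogdet : DifferentiableAt ℝ (fun A : Matrix m m ℝ => Real.log A.det) V :=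
    differentiable_det.differentiableAt.log hV.ne_zero
  unfold logLik
  simp only [dotProduct_mulVec_eq_trace_mul_vecMulVec, nonsing_inv_eq_ringInverse]
  fun_prop

theorem hasDerivAt_logLik_add_smul (hV : IsUnit V.det) (H : Matrix m m ℝ) :
    HasDerivAt (fun t : ℝ => logLik σ e (V + t • H))
      ((1 / 2 : ℝ) * (V⁻¹ * ((σ ^ 2)⁻¹ • vecMulVec e e - V) * V⁻¹ * H).trace) 0 := by
  unfold logLik
  simp only [dotProduct_mulVec_eq_trace_mul_vecMulVec]
  have := (((hasDerivAt_trace_inv_add_smul_mul hV H (vecMulVec e e)).const_mul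
    (σ ^ 2)⁻¹).const_add ((Fintype.card m : ℝ) * Real.log (σ ^ 2))).add
    (hasDerivAt_log_det_add_smul hV H)
  refine (this.const_mul (-(1 / 2 : ℝ))).congr_deriv ?_
  rw [trace_inv_mul_sub_mul_inv_mul hV, Matrix.neg_mul, trace_neg]
  ring

end LogLik

section Vech

@[simps]
def unvechₗ (q : ℕ) : (VechIdx q → ℝ) →ₗ[ℝ] Matrix (Fin q) (Fin q) ℝ where
  toFun := unvech
  map_add' a b := by
    ext i j
    simp only [unvech, Matrix.add_apply, Pi.add_apply]
    split_ifs <;> rfl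
  map_smul' t a := by
    ext i j
    simp only [unvech, Matrix.smul_apply, Pi.smul_apply, RingHom.id_apply]
    split_ifs <;> rfl

variable {q : ℕ}

theorem unvech_vech {A : Matrix (Fin q) (Fin q) ℝ} (hA : A.IsSymm) : unvech (vech A) = A := by
  ext i j
  simp only [unvech, vech]
  split_ifs
  · rfl
  · exact hA.apply i j

theorem unvech_single_apply (w : VechIdx q) (i j : Fin q) :
    unvech (Pi.single w 1) i j = dup q (i, j) w := by
  obtain ⟨⟨c, r⟩, hcr⟩ := w
  simp only [unvech, dup, Pi.single_apply, Subtype.ext_iff, Prod.ext_iff]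
  split_ifs <;> grind

theorem trace_mul_unvech_single (B : Matrix (Fin q) (Fin q) ℝ) (w : VechIdx q) :
    (B * unvech (Pi.single w 1)).trace = ((dup q)ᵀ *ᵥ _root_.vec B) w := by
  simp only [trace, Matrix.diag, mul_apply, mulVec, dotProduct, transpose_apply, _root_.vec,
    unvech_single_apply, Fintype.sum_prod_type]
  rw [Finset.sum_comm]
  simp only [mul_comm]

end Vech

section ConjSum

variable {ι m p : Type*} [Fintype ι] [Fintype p]

@[simps]
def conjSumₗ (Z : ι → Matrix m p ℝ) : Matrix p p ℝ →ₗ[ℝ] Matrix m m ℝ where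
  toFun U := ∑ j, Z j * U * (Z j)ᵀ
  map_add' U U' := by simp only [Matrix.mul_add, Matrix.add_mul, Finset.sum_add_distrib]
  map_smul' t U := by
    simp only [Matrix.mul_smul, Matrix.smul_mul, Finset.smul_sum, RingHom.id_apply]

theorem trace_mul_conjSumₗ [Fintype m] (Z : ι → Matrix m p ℝ) (G : Matrix m m ℝ)
    (U : Matrix p p ℝ) :
    (G * conjSumₗ Z U).trace = ((∑ j, (Z j)ᵀ * G * Z j) * U).trace := by
  simp only [conjSumₗ_apply, Matrix.mul_sum, Matrix.sum_mul, trace_sum]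
  refine Finset.sum_congr rfl fun j _ => ?_
  rw [← Matrix.mul_assoc, trace_mul_cycle, ← Matrix.mul_assoc]

end ConjSum

theorem stmt3_general (n r : ℕ) (σ : ℝ) (e : Fin n → ℝ)
    (l q : Fin r → ℕ)
    (Z : (k : Fin r) → Fin (l k) → Matrix (Fin n) (Fin (q k)) ℝ)
    (D : (k : Fin r) → Matrix (Fin (q k)) (Fin (q k)) ℝ)
    (hDsymm : ∀ k', (D k').IsSymm)
    (k : Fin r)
    (V : Matrix (Fin n) (Fin n) ℝ)
    (hV : V = 1 + ∑ k', ∑ j, Z k' j * D k' * (Z k' j)ᵀ)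
    (hVpd : V.PosDef)
    (g : (VechIdx (q k) → ℝ) → ℝ)
    -- `g v` is the log-likelihood `l` evaluated with `D_k` replaced by the unique symmetric
    -- matrix whose half-vectorization is `v`
    (hg : g = fun v =>
      -(1 / 2 : ℝ) * ((n : ℝ) * Real.log (σ ^ 2)
        + (σ ^ 2)⁻¹ *
          (e ⬝ᵥ ((1 + ∑ k', ∑ j,
            Z k' j * Function.update D k (unvech v) k' * (Z k' j)ᵀ)⁻¹ *ᵥ e))
        + Real.log (1 + ∑ k', ∑ j,
            Z k' j * Function.update D k (unvech v) k' * (Z k' j)ᵀ).det)) :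
    DifferentiableAt ℝ g (vech (D k)) ∧
    ∀ w : VechIdx (q k),
      fderiv ℝ g (vech (D k)) (Pi.single w 1) =
        ((1 / 2 : ℝ) • (dup (q k))ᵀ.mulVec
          (_root_.vec (∑ j, (Z k j)ᵀ * V⁻¹ * ((σ ^ 2)⁻¹ • vecMulVec e e - V) * V⁻¹ * Z k j))) w := by
  set L := conjSumₗ (Z k) ∘ₗ unvechₗ (q k)
  have hdet : IsUnit V.det := hVpd.det_pos.ne'.isUnit
  have hg_logLik : g = fun v => logLik σ e (V + L (v - vech (D k))) := by
    have hsum v := Fintype.sum_apply_update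
      (fun k' (X : Matrix (Fin (q k')) (Fin (q k')) ℝ) => ∑ j, Z k' j * X * (Z k' j)ᵀ)
      D k (unvech v)
    simp only [hg, hV, logLik, hsum, Fintype.card_fin, L, LinearMap.comp_apply, map_sub,
      unvechₗ_apply, unvech_vech (hDsymm k), conjSumₗ_apply, add_assoc]
  have hdiff : DifferentiableAt ℝ g (vech (D k)) := by
    rw [hg_logLik]
    refine (differentiableAt_logLik σ e (by simpa using hdet)).comp _ ?_
    exact (L.toContinuousLinearMap.differentiableAt.comp _
      (differentiableAt_id.sub_const _)).const_add V
  refine ⟨hdiff, fun w => ?_⟩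
  set H := conjSumₗ (Z k) (unvech (Pi.single w 1))
  have hline : HasLineDerivAt ℝ g
      ((1 / 2 : ℝ) * (V⁻¹ * ((σ ^ 2)⁻¹ • vecMulVec e e - V) * V⁻¹ * H).trace)
      (vech (D k)) (Pi.single w 1) := by
    have hLH : L (Pi.single w 1) = H := rfl
    simpa [HasLineDerivAt, hg_logLik, hLH] using hasDerivAt_logLik_add_smul σ e hdet H
  rw [(hdiff.hasFDerivAt.hasLineDerivAt _).unique hline, Pi.smul_apply, smul_eq_mul,
    ← trace_mul_unvech_single, trace_mul_conjSumₗ]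
  simp only [Matrix.mul_assoc]

/-- The log-likelihood of the multi-factor LMM, regarded as a function of
`vech(D_k)` (all other quantities held fixed, `D_k` being the unique symmetric matrix with the
given half-vectorization), is differentiable at `vech(D_k)` when `V` is positive definite there,
with gradient `(1/2) 𝒟_{q_k}ᵀ vec( ∑_j Z_{(k,j)}ᵀ V⁻¹ (σ⁻² e eᵀ − V) V⁻¹ Z_{(k,j)} )`. -/
theorem stmt3 (n r : ℕ) (hn : 0 < n) (σ : ℝ) (hσ : 0 < σ) (e : Fin n → ℝ)
    (l q : Fin r → ℕ)
    (Z : (k : Fin r) → Fin (l k) → Matrix (Fin n) (Fin (q k)) ℝ)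
    (D : (k : Fin r) → Matrix (Fin (q k)) (Fin (q k)) ℝ)
    (hDsymm : ∀ k', (D k').IsSymm)
    (k : Fin r)
    (V : Matrix (Fin n) (Fin n) ℝ)
    (hV : V = 1 + ∑ k', ∑ j, Z k' j * D k' * (Z k' j)ᵀ)
    (hVpd : V.PosDef)
    (g : (VechIdx (q k) → ℝ) → ℝ)
    -- `g v` is the log-likelihood `l` evaluated with `D_k` replaced by the unique symmetric
    -- matrix whose half-vectorization is `v`
    (hg : g = fun v =>
      -(1 / 2 : ℝ) * ((n : ℝ) * Real.log (σ ^ 2)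
        + (σ ^ 2)⁻¹ *
          (e ⬝ᵥ ((1 + ∑ k', ∑ j,
            Z k' j * Function.update D k (unvech v) k' * (Z k' j)ᵀ)⁻¹ *ᵥ e))
        + Real.log (1 + ∑ k', ∑ j,
            Z k' j * Function.update D k (unvech v) k' * (Z k' j)ᵀ).det)) :
    DifferentiableAt ℝ g (vech (D k)) ∧
    ∀ w : VechIdx (q k),
      fderiv ℝ g (vech (D k)) (Pi.single w 1) =
        ((1 / 2 : ℝ) • (dup (q k))ᵀ.mulVec
          (_root_.vec (∑ j, (Z k j)ᵀ * V⁻¹ * ((σ ^ 2)⁻¹ • vecMulVec e e - V) * V⁻¹ * Z k j))) w :=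
  stmt3_general n r σ e l q Z D hDsymm k V hV hVpd g hg
end

section
/- Let q ≥ 1 and let φ : ℝ^{q(q+1)/2} → ℝ^{q(q+1)/2} be the map φ(x) := vech( Λ(x)·Λ(x)ᵀ ), where Λ(x) denotes the unique lower-triangular q×q real matrix with vech(Λ(x)) = x. Then φ is differentiable at every x, and its derivative at x is the linear map h ↦ 𝓛_q·(I_{q²} + K_{q,q})·(Λ(x) ⊗ I_q)·𝓛_qᵀ·h; equivalently, the Jacobian matrix of vech(D) with respect to vech(Λ) under the Cholesky parameterization D = Λ·Λᵀ equals 𝓛_q·(I_{q²} + K_{q,q})·(Λ ⊗ I_q)·𝓛_qᵀ. -/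
open Matrix

/-- The elimination matrix `𝓛_q`: the unique zero–one `(q(q+1)/2) × q²` matrix with
`𝓛_q · vec A = vech A` for every `q × q` matrix `A`. -/
def elim (q : ℕ) : Matrix (VechIdx q) (Fin q × Fin q) ℝ := fun w v =>
  if w.1 = v then 1 else 0

/-- The unique lower-triangular matrix `Λ(x)` whose half-vectorization is `x`. -/
def unvechL {q : ℕ} (x : VechIdx q → ℝ) : Matrix (Fin q) (Fin q) ℝ := fun i j =>
  if h : j ≤ i then x ⟨(j, i), h⟩ else 0

/-! The map is the diagonal `x ↦ B x x` of the bilinear map `B x y = vech (Λ(x) Λ(y)ᵀ)`, so its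
derivative at `x` is `h ↦ vech (Λ(h) Λ(x)ᵀ + Λ(x) Λ(h)ᵀ)`. The identities `𝓛ᵀ h = vec Λ(h)`,
`(Λ ⊗ I) vec H = vec (H Λᵀ)`, `K vec M = vec Mᵀ` and `𝓛 vec M = vech M` turn the matrix
`𝓛 (I + K) (Λ ⊗ I) 𝓛ᵀ` applied to `h` into the same expression. -/

theorem ContinuousLinearMap.hasFDerivAt_apply_self {𝕜 E G : Type*} [NontriviallyNormedField 𝕜]
    [NormedAddCommGroup E] [NormedSpace 𝕜 E] [NormedAddCommGroup G] [NormedSpace 𝕜 G]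
    (B : E →L[𝕜] E →L[𝕜] G) (x : E) :
    HasFDerivAt (fun y => B y y) (B x + B.flip x) x :=
  B.hasFDerivAt_of_bilinear (hasFDerivAt_id x) (hasFDerivAt_id x)

open scoped Kronecker

section

variable {q : ℕ}

def unvechLₗ (q : ℕ) : (VechIdx q → ℝ) →ₗ[ℝ] Matrix (Fin q) (Fin q) ℝ where
  toFun := unvechL
  map_add' x y := by ext i j; simp only [unvechL, Matrix.add_apply, Pi.add_apply]; split <;> simp
  map_smul' c x := by ext i j; simp only [unvechL, Matrix.smul_apply, Pi.smul_apply]; split <;> simp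

def vechₗ (q : ℕ) : Matrix (Fin q) (Fin q) ℝ →ₗ[ℝ] (VechIdx q → ℝ) where
  toFun := vech
  map_add' _ _ := rfl
  map_smul' _ _ := rfl

noncomputable def vechMulTranspose (q : ℕ) :
    (VechIdx q → ℝ) →L[ℝ] (VechIdx q → ℝ) →L[ℝ] (VechIdx q → ℝ) :=
  LinearMap.toContinuousLinearMap <| LinearMap.toContinuousLinearMap.toLinearMap ∘ₗ
    ((LinearMap.mul ℝ (Matrix (Fin q) (Fin q) ℝ)).compl₁₂ (unvechLₗ q)
      ((transposeLinearEquiv (Fin q) (Fin q) ℝ ℝ).toLinearMap ∘ₗ unvechLₗ q)).compr₂ (vechₗ q)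

@[simp]
theorem vechMulTranspose_apply (x y : VechIdx q → ℝ) :
    vechMulTranspose q x y = vech (unvechL x * (unvechL y)ᵀ) := rfl

theorem elim_mulVec_vec (A : Matrix (Fin q) (Fin q) ℝ) : elim q *ᵥ Matrix.vec A = vech A := by
  ext w
  simp [mulVec, dotProduct, elim, vech]

theorem elim_transpose_mulVec (x : VechIdx q → ℝ) : (elim q)ᵀ *ᵥ x = Matrix.vec (unvechL x) := by
  ext ⟨j, i⟩
  simp only [mulVec, dotProduct, transpose_apply, elim, ite_mul, one_mul, zero_mul, Matrix.vec,
    unvechL]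
  split_ifs with h
  · rw [Finset.sum_eq_single ⟨(j, i), h⟩] <;> aesop
  · exact Finset.sum_eq_zero fun p _ => if_neg fun hp => h (by simpa [hp] using p.2)

theorem commMat_mulVec_vec (A : Matrix (Fin q) (Fin q) ℝ) :
    commMat q *ᵥ Matrix.vec A = Matrix.vec Aᵀ := by
  ext ⟨j, i⟩
  simp [mulVec, dotProduct, commMat, Fintype.sum_prod_type, ite_and]

theorem cholesky_jacobian_mulVec (L : Matrix (Fin q) (Fin q) ℝ) (h : VechIdx q → ℝ) :
    (elim q * (1 + commMat q) * (L ⊗ₖ (1 : Matrix (Fin q) (Fin q) ℝ)) * (elim q)ᵀ) *ᵥ h =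
      vech (unvechL h * Lᵀ + L * (unvechL h)ᵀ) := by
  simp only [← mulVec_mulVec, elim_transpose_mulVec, kronecker_mulVec_vec, Matrix.one_mul,
    add_mulVec, one_mulVec, commMat_mulVec_vec, transpose_mul, transpose_transpose, mulVec_add,
    elim_mulVec_vec]
  rfl

end

theorem stmt10_general (q : ℕ)
    (φ : (VechIdx q → ℝ) → (VechIdx q → ℝ))
    (hφ : φ = fun x => vech (unvechL x * (unvechL x)ᵀ)) :
    ∀ x : VechIdx q → ℝ,
      DifferentiableAt ℝ φ x ∧
      ∀ h : VechIdx q → ℝ,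
        fderiv ℝ φ x h =
          (elim q * (1 + commMat q) *
            kroneckerMap (· * ·) (unvechL x) (1 : Matrix (Fin q) (Fin q) ℝ) *
            (elim q)ᵀ).mulVec h := by
  intro x
  have hφx : HasFDerivAt φ (vechMulTranspose q x + (vechMulTranspose q).flip x) x := by
    subst hφ
    simpa only [vechMulTranspose_apply] using (vechMulTranspose q).hasFDerivAt_apply_self x
  refine ⟨hφx.differentiableAt, fun h => ?_⟩
  rw [hφx.fderiv, cholesky_jacobian_mulVec, add_comm]
  rfl

/-- The map `φ(x) = vech(Λ(x) Λ(x)ᵀ)`, with `Λ(x)` the unique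
lower-triangular matrix having `vech(Λ(x)) = x`, is differentiable everywhere, and its
derivative at `x` is `h ↦ 𝓛_q (I_{q²} + K_{q,q}) (Λ(x) ⊗ I_q) 𝓛_qᵀ h`; i.e. the Jacobian of
`vech(D)` with respect to `vech(Λ)` under the Cholesky parameterization `D = Λ Λᵀ` is
`𝓛_q (I_{q²} + K_{q,q}) (Λ ⊗ I_q) 𝓛_qᵀ`. -/
theorem stmt10 (q : ℕ) (hq : 1 ≤ q)
    (φ : (VechIdx q → ℝ) → (VechIdx q → ℝ))
    (hφ : φ = fun x => vech (unvechL x * (unvechL x)ᵀ)) :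
    ∀ x : VechIdx q → ℝ,
      DifferentiableAt ℝ φ x ∧
      ∀ h : VechIdx q → ℝ,
        fderiv ℝ φ x h =
          (elim q * (1 + commMat q) *
            kroneckerMap (· * ·) (unvechL x) (1 : Matrix (Fin q) (Fin q) ℝ) *
            (elim q)ᵀ).mulVec h :=
  stmt10_general q φ hφ
end
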